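/- Let ρ > 0, u ∈ ℝ², T > 0, and let 𝒯 be a real symmetric positive definite 2×2 matrix with tr(𝒯) = 2T. Let 𝒢(v) = (ρ/√(det(2π𝒯))) exp(−(1/2)(v−u)·𝒯⁻¹(v−u)) be the anisotropic Gaussian and M = M[ρ,u,T] the 2D Maxwellian, and let Π_M be the 2D projection operator associated with M. Then the projection of the Gaussian onto the nullspace of the collision operator is the Maxwellian: Π_M[𝒢] = M. -/

import Mathlib

open MeasureTheory Real Matrix

/-- The 2D Maxwellian with density `ρ`, bulk velocity `u ∈ ℝ²`, and temperature `T`. -/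
noncomputable def maxwellian2 (ρ : ℝ) (u : ℝ × ℝ) (T : ℝ) (v : ℝ × ℝ) : ℝ :=
  ρ / (2 * Real.pi * T) *
    Real.exp (-((v.1 - u.1) ^ 2 + (v.2 - u.2) ^ 2) / (2 * T))

/-- The anisotropic Gaussian with density `ρ`, bulk velocity `u ∈ ℝ²`,
and (modified) temperature tensor `𝒯`. -/
noncomputable def anisoGaussian (ρ : ℝ) (u : ℝ × ℝ)
    (𝒯 : Matrix (Fin 2) (Fin 2) ℝ) (v : ℝ × ℝ) : ℝ :=
  ρ / Real.sqrt (((2 * Real.pi) • 𝒯).det) *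
    Real.exp (-(1 / 2) *
      (![v.1 - u.1, v.2 - u.2] ⬝ᵥ (𝒯⁻¹ *ᵥ ![v.1 - u.1, v.2 - u.2])))

/-- The 2D micro-macro projection operator `Π_M` associated with the
Maxwellian `M[ρ,u,T]`. -/
noncomputable def projMax2 (ρ : ℝ) (u : ℝ × ℝ) (T : ℝ)
    (F : ℝ × ℝ → ℝ) (v : ℝ × ℝ) : ℝ :=
  ((1 / ρ) * (∫ w : ℝ × ℝ, F w)
    + ((v.1 - u.1) / Real.sqrt T) *
        ((1 / ρ) * ∫ w : ℝ × ℝ, ((w.1 - u.1) / Real.sqrt T) * F w)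
    + ((v.2 - u.2) / Real.sqrt T) *
        ((1 / ρ) * ∫ w : ℝ × ℝ, ((w.2 - u.2) / Real.sqrt T) * F w)
    + (((v.1 - u.1) ^ 2 + (v.2 - u.2) ^ 2) / (2 * T) - 1) *
        ((1 / ρ) * ∫ w : ℝ × ℝ,
          (((w.1 - u.1) ^ 2 + (w.2 - u.2) ^ 2) / (2 * T) - 1) * F w))
  * maxwellian2 ρ u T v

/-!
Π_M[F] depends on F only through its mass, its momentum about u and its energy moment
∫ (‖v - u‖² / (2T) - 1) F. For the Gaussian these are ρ, 0 and ρ (tr 𝒯 / (2T) - 1) = 0, the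
same as for M, so Π_M[𝒢] = (1 + 0 + 0 + 0) M = M. The moments of 𝒢 follow from the LDLᵀ
factorisation of 𝒯: after the shear (x, y) ↦ (x, y + (𝒯₀₁ / 𝒯₀₀) x), 𝒢 becomes ρ times a
product of two centred one-dimensional Gaussians with variances 𝒯₀₀ and det 𝒯 / 𝒯₀₀.
-/

open ProbabilityTheory
open scoped NNReal

section GaussianMoments

variable {v : ℝ≥0}

lemma integrable_id_gaussianReal : Integrable (fun x : ℝ => x) (gaussianReal 0 v) :=
  (memLp_id_gaussianReal 1).integrable le_rfl

lemma integrable_sq_gaussianReal : Integrable (fun x : ℝ => x ^ 2) (gaussianReal 0 v) :=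
  (memLp_id_gaussianReal 2).integrable_sq

lemma integral_sq_gaussianReal : ∫ x, x ^ 2 ∂gaussianReal 0 v = v := by
  rw [← variance_id_gaussianReal (μ := 0) (v := v),
    variance_of_integral_eq_zero aemeasurable_id integral_id_gaussianReal]
  rfl

lemma integrable_quadratic_gaussianReal (a b c : ℝ) :
    Integrable (fun x => a * x ^ 2 + b * x + c) (gaussianReal 0 v) :=
  ((integrable_sq_gaussianReal.const_mul a).add (integrable_id_gaussianReal.const_mul b)).add
    (integrable_const c)

lemma integral_quadratic_gaussianReal (a b c : ℝ) :
    ∫ x, (a * x ^ 2 + b * x + c) ∂gaussianReal 0 v = a * v + c := by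
  have h2 : Integrable (fun x : ℝ => a * x ^ 2) (gaussianReal 0 v) :=
    integrable_sq_gaussianReal.const_mul a
  have h1 : Integrable (fun x : ℝ => b * x) (gaussianReal 0 v) :=
    integrable_id_gaussianReal.const_mul b
  rw [integral_add (f := fun x => a * x ^ 2 + b * x) (h2.add h1) (integrable_const c),
    integral_add h2 h1, integral_const_mul, integral_const_mul, integral_sq_gaussianReal,
    integral_id_gaussianReal]
  simp

lemma integrable_quadratic_mul_gaussianPDFReal (hv : v ≠ 0) (a b c : ℝ) :
    Integrable (fun x => (a * x ^ 2 + b * x + c) * gaussianPDFReal 0 v x) := by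
  have h := integrable_quadratic_gaussianReal (v := v) a b c
  rw [gaussianReal_of_var_ne_zero _ hv, integrable_withDensity_iff_integrable_smul'
    (measurable_gaussianPDF _ _) (ae_of_all _ fun _ => gaussianPDF_lt_top)] at h
  simpa [toReal_gaussianPDF, mul_comm] using h

lemma integral_quadratic_mul_gaussianPDFReal (hv : v ≠ 0) (a b c : ℝ) :
    ∫ x, (a * x ^ 2 + b * x + c) * gaussianPDFReal 0 v x = a * v + c := by
  simp_rw [← integral_quadratic_gaussianReal (v := v) a b c,
    integral_gaussianReal_eq_integral_smul hv, smul_eq_mul, mul_comm]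

end GaussianMoments

section ProductGaussian

variable {σ₁ σ₂ : ℝ≥0}

lemma integrable_quadratic_mul_gaussianPDFReal_prod (h₁ : σ₁ ≠ 0) (h₂ : σ₂ ≠ 0)
    (a b c a' b' c' : ℝ) :
    Integrable (fun z : ℝ × ℝ => (a * z.1 ^ 2 + b * z.1 + c) * gaussianPDFReal 0 σ₁ z.1 *
      ((a' * z.2 ^ 2 + b' * z.2 + c') * gaussianPDFReal 0 σ₂ z.2)) := by
  rw [Measure.volume_eq_prod]
  exact (integrable_quadratic_mul_gaussianPDFReal h₁ a b c).mul_prod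
    (integrable_quadratic_mul_gaussianPDFReal h₂ a' b' c')

lemma integral_quadratic_mul_gaussianPDFReal_prod (h₁ : σ₁ ≠ 0) (h₂ : σ₂ ≠ 0)
    (a b c a' b' c' : ℝ) :
    ∫ z : ℝ × ℝ, (a * z.1 ^ 2 + b * z.1 + c) * gaussianPDFReal 0 σ₁ z.1 *
      ((a' * z.2 ^ 2 + b' * z.2 + c') * gaussianPDFReal 0 σ₂ z.2) =
      (a * σ₁ + c) * (a' * σ₂ + c') := by
  rw [← integral_quadratic_mul_gaussianPDFReal h₁, ← integral_quadratic_mul_gaussianPDFReal h₂,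
    Measure.volume_eq_prod]
  exact integral_prod_mul (fun x => (a * x ^ 2 + b * x + c) * gaussianPDFReal 0 σ₁ x)
    (fun y => (a' * y ^ 2 + b' * y + c') * gaussianPDFReal 0 σ₂ y)

theorem integral_quadratic_form_mul_gaussianPDFReal_prod (h₁ : σ₁ ≠ 0) (h₂ : σ₂ ≠ 0)
    (a b c d e f : ℝ) :
    ∫ z : ℝ × ℝ, (a * z.1 ^ 2 + b * z.1 * z.2 + c * z.2 ^ 2 + d * z.1 + e * z.2 + f) *
      (gaussianPDFReal 0 σ₁ z.1 * gaussianPDFReal 0 σ₂ z.2) = a * σ₁ + c * σ₂ + f := by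
  set p₁ := gaussianPDFReal 0 σ₁
  set p₂ := gaussianPDFReal 0 σ₂
  have hsplit : (fun z : ℝ × ℝ =>
      (a * z.1 ^ 2 + b * z.1 * z.2 + c * z.2 ^ 2 + d * z.1 + e * z.2 + f) * (p₁ z.1 * p₂ z.2)) =
      fun z => (a * z.1 ^ 2 + d * z.1 + f) * p₁ z.1 * ((0 * z.2 ^ 2 + 0 * z.2 + 1) * p₂ z.2) +
        (0 * z.1 ^ 2 + b * z.1 + e) * p₁ z.1 * ((0 * z.2 ^ 2 + 1 * z.2 + 0) * p₂ z.2) +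
        (0 * z.1 ^ 2 + 0 * z.1 + c) * p₁ z.1 * ((1 * z.2 ^ 2 + 0 * z.2 + 0) * p₂ z.2) := by
    ext z; ring
  have hint := integrable_quadratic_mul_gaussianPDFReal_prod h₁ h₂
  rw [hsplit, integral_add ((hint _ _ _ _ _ _).fun_add (hint _ _ _ _ _ _)) (hint _ _ _ _ _ _),
    integral_add (hint _ _ _ _ _ _) (hint _ _ _ _ _ _)]
  simp only [integral_quadratic_mul_gaussianPDFReal_prod h₁ h₂]
  ring

end ProductGaussian

def shearEquiv (k : ℝ) : ℝ × ℝ ≃ᵐ ℝ × ℝ where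
  toFun z := (z.1, z.2 + k * z.1)
  invFun z := (z.1, z.2 - k * z.1)
  left_inv z := by simp
  right_inv z := by simp
  measurable_toFun := by
    change Measurable fun z : ℝ × ℝ => (z.1, z.2 + k * z.1)
    fun_prop
  measurable_invFun := by
    change Measurable fun z : ℝ × ℝ => (z.1, z.2 - k * z.1)
    fun_prop

lemma measurePreserving_shearEquiv (k : ℝ) : MeasurePreserving (shearEquiv k) := by
  rw [Measure.volume_eq_prod]
  exact (MeasurePreserving.id volume).skew_product (g := fun x y => y + k * x) (by fun_prop)
    (ae_of_all _ fun x => map_add_right_eq_self volume (k * x))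

lemma integral_comp_add_shear (u : ℝ × ℝ) (k : ℝ) (F : ℝ × ℝ → ℝ) :
    ∫ z : ℝ × ℝ, F (u + (z.1, z.2 + k * z.1)) = ∫ w, F w :=
  ((measurePreserving_shearEquiv k).integral_comp' fun w => F (u + w)).trans
    (integral_add_left_eq_self F u)

section AnisotropicGaussian

variable {𝒯 : Matrix (Fin 2) (Fin 2) ℝ}

lemma sqrt_det_two_pi_smul : √(((2 * π) • 𝒯).det) = 2 * π * √𝒯.det := by
  rw [det_smul, Fintype.card_fin, sqrt_mul (by positivity), sqrt_sq (by positivity)]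

lemma dotProduct_inv_mulVec_shear (hsymm : 𝒯 1 0 = 𝒯 0 1) (h₀ : 𝒯 0 0 ≠ 0) (hdet : 𝒯.det ≠ 0)
    (x y : ℝ) :
    ![x, y + 𝒯 0 1 / 𝒯 0 0 * x] ⬝ᵥ (𝒯⁻¹ *ᵥ ![x, y + 𝒯 0 1 / 𝒯 0 0 * x]) =
      x ^ 2 / 𝒯 0 0 + y ^ 2 / (𝒯.det / 𝒯 0 0) := by
  rw [det_fin_two, hsymm, ← sq] at hdet ⊢
  simp [inv_def, adjugate_fin_two, det_fin_two, hsymm, dotProduct, mulVec, Fin.sum_univ_two]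
  field_simp
  ring

lemma anisoGaussian_add_shear (ρ : ℝ) (u : ℝ × ℝ) (h𝒯 : 𝒯.PosDef) (x y : ℝ) :
    anisoGaussian ρ u 𝒯 (u + (x, y + 𝒯 0 1 / 𝒯 0 0 * x)) =
      ρ * (gaussianPDFReal 0 (𝒯 0 0).toNNReal x *
        gaussianPDFReal 0 (𝒯.det / 𝒯 0 0).toNNReal y) := by
  have h₀ : 0 < 𝒯 0 0 := h𝒯.diag_pos
  have hdet : 0 < 𝒯.det := h𝒯.det_pos
  have hsymm : 𝒯 1 0 = 𝒯 0 1 := h𝒯.isHermitian.apply 0 1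
  have hsqrt : √(2 * π * 𝒯 0 0) * √(2 * π * (𝒯.det / 𝒯 0 0)) = 2 * π * √𝒯.det := by
    rw [← sqrt_mul (by positivity), show 2 * π * 𝒯 0 0 * (2 * π * (𝒯.det / 𝒯 0 0)) =
      (2 * π) ^ 2 * 𝒯.det by field_simp, sqrt_mul (by positivity), sqrt_sq (by positivity)]
  simp only [anisoGaussian, gaussianPDFReal, Prod.fst_add, Prod.snd_add, add_sub_cancel_left,
    sub_zero, Real.coe_toNNReal _ h₀.le, Real.coe_toNNReal _ (div_pos hdet h₀).le,
    sqrt_det_two_pi_smul, dotProduct_inv_mulVec_shear hsymm h₀.ne' hdet.ne']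
  rw [← hsqrt, mul_mul_mul_comm, ← exp_add, div_eq_mul_inv, mul_inv, mul_assoc]
  congr 3
  ring

theorem integral_quadratic_form_mul_anisoGaussian (ρ : ℝ) (u : ℝ × ℝ) (h𝒯 : 𝒯.PosDef)
    (a b c d e f : ℝ) :
    ∫ w : ℝ × ℝ, (a * (w.1 - u.1) ^ 2 + b * (w.1 - u.1) * (w.2 - u.2) + c * (w.2 - u.2) ^ 2 +
        d * (w.1 - u.1) + e * (w.2 - u.2) + f) * anisoGaussian ρ u 𝒯 w =
      ρ * (a * 𝒯 0 0 + b * 𝒯 0 1 + c * 𝒯 1 1 + f) := by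
  have h₀ : 0 < 𝒯 0 0 := h𝒯.diag_pos
  have hdet : 0 < 𝒯.det := h𝒯.det_pos
  have hsymm : 𝒯 1 0 = 𝒯 0 1 := h𝒯.isHermitian.apply 0 1
  rw [← integral_comp_add_shear u (𝒯 0 1 / 𝒯 0 0)]
  simp only [anisoGaussian_add_shear ρ u h𝒯, Prod.fst_add, Prod.snd_add, add_sub_cancel_left]
  set k := 𝒯 0 1 / 𝒯 0 0 with hk
  have hmoments := integral_quadratic_form_mul_gaussianPDFReal_prod
    (Real.toNNReal_pos.mpr h₀).ne' (Real.toNNReal_pos.mpr (div_pos hdet h₀)).ne'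
    (a + b * k + c * k ^ 2) (b + 2 * c * k) c (d + e * k) e f
  rw [Real.coe_toNNReal _ h₀.le, Real.coe_toNNReal _ (div_pos hdet h₀).le] at hmoments
  calc _ = ρ * ∫ z : ℝ × ℝ, ((a + b * k + c * k ^ 2) * z.1 ^ 2 + (b + 2 * c * k) * z.1 * z.2 +
          c * z.2 ^ 2 + (d + e * k) * z.1 + e * z.2 + f) *
          (gaussianPDFReal 0 (𝒯 0 0).toNNReal z.1 *
            gaussianPDFReal 0 (𝒯.det / 𝒯 0 0).toNNReal z.2) := by
        rw [← integral_const_mul]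
        congr 1 with z
        ring
    _ = _ := by
        rw [hmoments, det_fin_two, hsymm, hk]
        field_simp
        ring

end AnisotropicGaussian

theorem projMax2_gaussian_eq_maxwellian_general (ρ T : ℝ) (u : ℝ × ℝ)
    (𝒯 : Matrix (Fin 2) (Fin 2) ℝ)
    (h𝒯 : 𝒯.PosDef) (htr : 𝒯.trace = 2 * T) :
    ∀ v : ℝ × ℝ, projMax2 ρ u T (anisoGaussian ρ u 𝒯) v = maxwellian2 ρ u T v := by
  intro v
  have hT : T ≠ 0 := by linarith [h𝒯.trace_pos]
  have hmoment := integral_quadratic_form_mul_anisoGaussian ρ u h𝒯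
  have hmass : ∫ w, anisoGaussian ρ u 𝒯 w = ρ := by
    simpa using hmoment 0 0 0 0 0 1
  have hmom₁ : ∫ w : ℝ × ℝ, (w.1 - u.1) / √T * anisoGaussian ρ u 𝒯 w = 0 := by
    simpa [div_eq_inv_mul] using hmoment 0 0 0 (√T)⁻¹ 0 0
  have hmom₂ : ∫ w : ℝ × ℝ, (w.2 - u.2) / √T * anisoGaussian ρ u 𝒯 w = 0 := by
    simpa [div_eq_inv_mul] using hmoment 0 0 0 0 (√T)⁻¹ 0
  have henergy : ∫ w : ℝ × ℝ, (((w.1 - u.1) ^ 2 + (w.2 - u.2) ^ 2) / (2 * T) - 1) *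
      anisoGaussian ρ u 𝒯 w = 0 := by
    rw [trace_fin_two] at htr
    convert hmoment (2 * T)⁻¹ 0 (2 * T)⁻¹ 0 0 (-1) using 1
    · congr 1 with w
      ring
    · field_simp
      linear_combination -ρ * htr
  rw [projMax2, hmass, hmom₁, hmom₂, henergy]
  rcases eq_or_ne ρ 0 with rfl | hρ
  · simp [maxwellian2]
  · simp [hρ]

theorem projMax2_gaussian_eq_maxwellian (ρ T : ℝ) (u : ℝ × ℝ)
    (𝒯 : Matrix (Fin 2) (Fin 2) ℝ)
    (hρ : 0 < ρ) (hT : 0 < T) (h𝒯 : 𝒯.PosDef) (htr : 𝒯.trace = 2 * T) :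
    ∀ v : ℝ × ℝ, projMax2 ρ u T (anisoGaussian ρ u 𝒯) v = maxwellian2 ρ u T v :=
  projMax2_gaussian_eq_maxwellian_general ρ T u 𝒯 h𝒯 htr
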